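/- Second-order safe set invariance: let h : ℝ^n → ℝ be twice continuously differentiable along a trajectory x(t), define ψ₀ = h and ψ₁ = ψ̇₀ + k₁ψ₀ with k₁ > 0. If ψ₀(x(0)) ≥ 0, ψ₁(x(0)) ≥ 0, and ψ̇₁(t) + k₂ψ₁(t) ≥ 0 for all t ≥ 0 with k₂ > 0, then ψ₀(x(t)) ≥ 0 and ψ₁(x(t)) ≥ 0 for all t ≥ 0. -/

import Mathlib

open Real Set

section Comparison

variable {y : ℝ → ℝ} {y' : ℝ → ℝ} {k a : ℝ}

theorem hasDerivAt_exp_mul_mul {d t : ℝ} (hy : HasDerivAt y d t) :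
    HasDerivAt (fun s => exp (k * s) * y s) (exp (k * t) * (d + k * y t)) t := by
  have hexp : HasDerivAt (fun s => exp (k * s)) (exp (k * t) * k) t :=
    ((hasDerivAt_id t).const_mul k).exp.congr_deriv (by simp)
  exact (hexp.mul hy).congr_deriv (by ring)

/-- The integrating factor `exp (k t)` makes `exp (k t) * y t` nondecreasing on `[a, ∞)`. -/
theorem nonneg_of_deriv_add_mul_nonneg (hd : ∀ t ≥ a, HasDerivAt y (y' t) t)
    (ha : 0 ≤ y a) (hineq : ∀ t ≥ a, 0 ≤ y' t + k * y t) :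
    ∀ t ≥ a, 0 ≤ y t := by
  intro t ht
  have hd' : ∀ s ≥ a, HasDerivAt (fun s => exp (k * s) * y s)
      (exp (k * s) * (y' s + k * y s)) s := fun s hs => hasDerivAt_exp_mul_mul (hd s hs)
  have hmono : MonotoneOn (fun s => exp (k * s) * y s) (Ici a) := by
    refine monotoneOn_of_hasDerivWithinAt_nonneg (f' := fun s => exp (k * s) * (y' s + k * y s))
      (convex_Ici a)
      (fun s hs => (hd' s hs).continuousAt.continuousWithinAt) (fun s hs => ?_) fun s hs => ?_
    all_goals rw [interior_Ici] at hs
    · exact (hd' s (le_of_lt hs)).hasDerivWithinAt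
    · exact mul_nonneg (exp_pos _).le (hineq s (le_of_lt hs))
  have hexp_mul_nonneg : 0 ≤ exp (k * t) * y t :=
    (mul_nonneg (exp_pos _).le ha).trans (hmono self_mem_Ici ht ht)
  exact nonneg_of_mul_nonneg_right hexp_mul_nonneg (exp_pos _)

end Comparison

theorem second_order_hocbf_invariance_general
    {n : ℕ} (h : EuclideanSpace ℝ (Fin n) → ℝ) (x : ℝ → EuclideanSpace ℝ (Fin n))
    (k₁ k₂ : ℝ)
    (ψ₀' ψ₀'' : ℝ → ℝ)
    (hd1 : ∀ t, HasDerivAt (fun s => h (x s)) (ψ₀' t) t)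
    (hd2 : ∀ t, HasDerivAt ψ₀' (ψ₀'' t) t)
    (h0 : h (x 0) ≥ 0)
    (h1 : ψ₀' 0 + k₁ * h (x 0) ≥ 0)
    (hineq : ∀ t ≥ (0 : ℝ),
      (ψ₀'' t + k₁ * ψ₀' t) + k₂ * (ψ₀' t + k₁ * h (x t)) ≥ 0) :
    ∀ t ≥ (0 : ℝ), h (x t) ≥ 0 ∧ ψ₀' t + k₁ * h (x t) ≥ 0 := by
  have hψ₁ : ∀ t ≥ (0 : ℝ), ψ₀' t + k₁ * h (x t) ≥ 0 :=
    nonneg_of_deriv_add_mul_nonneg (fun t _ => (hd2 t).add ((hd1 t).const_mul k₁)) h1 hineq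
  have hψ₀ : ∀ t ≥ (0 : ℝ), h (x t) ≥ 0 :=
    nonneg_of_deriv_add_mul_nonneg (fun t _ => hd1 t) h0 hψ₁
  exact fun t ht => ⟨hψ₀ t ht, hψ₁ t ht⟩

/-- Second-order (high-order CBF) safe-set invariance with linear class-K
functions: with `ψ₀(t) = h(x(t))` twice differentiable, `ψ₁ = ψ̇₀ + k₁ψ₀`, if
`ψ₀(0) ≥ 0`, `ψ₁(0) ≥ 0`, and `ψ̇₁ + k₂ψ₁ ≥ 0` for all `t ≥ 0`, then
`ψ₀(t) ≥ 0` and `ψ₁(t) ≥ 0` for all `t ≥ 0`. -/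
theorem second_order_hocbf_invariance
    {n : ℕ} (h : EuclideanSpace ℝ (Fin n) → ℝ) (x : ℝ → EuclideanSpace ℝ (Fin n))
    (k₁ k₂ : ℝ) (hk₁ : 0 < k₁) (hk₂ : 0 < k₂)
    (ψ₀' ψ₀'' : ℝ → ℝ)
    (hd1 : ∀ t, HasDerivAt (fun s => h (x s)) (ψ₀' t) t)
    (hd2 : ∀ t, HasDerivAt ψ₀' (ψ₀'' t) t)
    (h0 : h (x 0) ≥ 0)
    (h1 : ψ₀' 0 + k₁ * h (x 0) ≥ 0)
    (hineq : ∀ t ≥ (0 : ℝ),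
      (ψ₀'' t + k₁ * ψ₀' t) + k₂ * (ψ₀' t + k₁ * h (x t)) ≥ 0) :
    ∀ t ≥ (0 : ℝ), h (x t) ≥ 0 ∧ ψ₀' t + k₁ * h (x t) ≥ 0 :=
  second_order_hocbf_invariance_general h x k₁ k₂ ψ₀' ψ₀'' hd1 hd2 h0 h1 hineq
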